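/- For every integer r ≥ 0 one has z₂^r ⧢ z₂ = (r+1)·z₂^{r+1} + 4·Σ_{1 ≤ i ≤ j ≤ r} z₂^{i−1} z₃ z₂^{j−i} z₁ z₂^{r−j}, where powers denote repeated concatenation and z₂⁰ = 1. -/

import Mathlib

open scoped Classical BigOperators

noncomputable section

/-- The underlying space of `𝔥¹ = ℚ⟨z₁, z₂, …⟩`: formal ℚ-linear combinations of words,
a word being encoded by the list of subscripts `[k₁, …, k_r]` of `z_{k₁} ⋯ z_{k_r}`. -/
abbrev H : Type := List ℕ →₀ ℚ

/-- The space of ℚ-linear combinations of words in the two letters `x` (= `false`)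
and `y` (= `true`). -/
abbrev Bw : Type := List Bool →₀ ℚ

/-- The word `z_{k₁} ⋯ z_{k_r}` as an element of `H`. -/
def zw (l : List ℕ) : H := Finsupp.single l 1

/-- Membership in `𝔥¹` (all subscripts ≥ 1). -/
def isH1 (w : H) : Prop := ∀ l ∈ w.support, ∀ k ∈ l, 1 ≤ k

/-- Membership in `𝔥^{≥2}` (all subscripts ≥ 2). -/
def isH2 (w : H) : Prop := ∀ l ∈ w.support, ∀ k ∈ l, 2 ≤ k

/-- Membership in `𝔥⁰` (first subscript ≥ 2, all others ≥ 1). -/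
def isH0 (w : H) : Prop :=
  ∀ l ∈ w.support, (∀ k ∈ l, 1 ≤ k) ∧ ∀ k, l.head? = some k → 2 ≤ k

/-- The harmonic product on words. -/
def hmulW : List ℕ → List ℕ → H
  | [], v => Finsupp.single v 1
  | k :: u, [] => Finsupp.single (k :: u) 1
  | k :: u, l :: v =>
      Finsupp.mapDomain (k :: ·) (hmulW u (l :: v)) +
      Finsupp.mapDomain (l :: ·) (hmulW (k :: u) v) +
      Finsupp.mapDomain ((k + l) :: ·) (hmulW u v)
  termination_by u v => u.length + v.length

/-- The harmonic product `*` on `𝔥¹`. -/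
def hmul (u v : H) : H := u.sum fun a ca => v.sum fun b cb => (ca * cb) • hmulW a b

/-- The shuffle product on words in the letters `x, y`. -/
def shW : List Bool → List Bool → Bw
  | [], v => Finsupp.single v 1
  | a :: u, [] => Finsupp.single (a :: u) 1
  | a :: u, b :: v =>
      Finsupp.mapDomain (a :: ·) (shW u (b :: v)) +
      Finsupp.mapDomain (b :: ·) (shW (a :: u) v)
  termination_by u v => u.length + v.length

/-- The identification `z_k = x^{k-1} y`. -/
def toXY (l : List ℕ) : List Bool :=
  (l.map fun k => List.replicate (k - 1) false ++ [true]).flatten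

def fromXYAux : List Bool → ℕ → List ℕ
  | [], _ => []
  | false :: t, c => fromXYAux t (c + 1)
  | true :: t, c => (c + 1) :: fromXYAux t 0

/-- Parse a word in `x, y` (ending in `y`) back into a word `z_{k₁} ⋯ z_{k_r}`. -/
def fromXY (l : List Bool) : List ℕ := fromXYAux l 0

def shmulW (a b : List ℕ) : H := Finsupp.mapDomain fromXY (shW (toXY a) (toXY b))

/-- The shuffle product `⧢` on `𝔥¹` (via the identification `z_k = x^{k-1}y`). -/
def shmul (u v : H) : H := u.sum fun a ca => v.sum fun b cb => (ca * cb) • shmulW a b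

/-- `φ(w) = w * z₂ − w ⧢ z₂`. -/
def phi (w : H) : H := hmul w (zw [2]) - shmul w (zw [2])

/-- `R(u,v) = φ(u*v) − φ(u)*v − u*φ(v)`. -/
def Rop (u v : H) : H := phi (hmul u v) - hmul (phi u) v - hmul u (phi v)

/-- The weight operator `W`. -/
def Wop (w : H) : H := w.sum fun a c => Finsupp.single a (c * (a.sum : ℚ))

/-- `Σ_{w = u'(p)u''} u' y u''`: replace one occurrence of the factor `p` by `y`. -/
def replaceOcc (p : List Bool) : List Bool → Bw
  | [] => 0
  | a :: t =>
      (if p.isPrefixOf (a :: t) then Finsupp.single (true :: (a :: t).drop p.length) 1 else 0) +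
      Finsupp.mapDomain (a :: ·) (replaceOcc p t)

/-- The map `δ` on words in the letters `x, y`. -/
def deltaB (l : List Bool) : Bw :=
  (if l.take 2 = [true, false] then (1/2 : ℚ) • Finsupp.single (l.drop 2) 1 else 0) -
  (if l.take 2 = [false, true] then (1/2 : ℚ) • Finsupp.single (l.drop 2) 1 else 0) +
  (if l.take 2 = [true, true] then (1/4 : ℚ) • Finsupp.single (l.drop 2) 1 else 0) +
  (1/2 : ℚ) • (replaceOcc [true, true, false] l - replaceOcc [false, true, true] l)

/-- The map `δ : 𝔥¹ → 𝔥¹`. -/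
def deltaH (w : H) : H := w.sum fun a c => c • Finsupp.mapDomain fromXY (deltaB (toXY a))

/-- The recursively defined map `𝔇` on tuples, with an explicit fuel parameter.
(The fuel `c.sum + 1` is always sufficient, since the total sum of the entries strictly
decreases in each recursive call.) -/
def Dfuel : ℕ → List ℕ → Bw
  | _, [] => Finsupp.single [] 1
  | 0, _ :: _ => 0
  | fuel + 1, k :: t =>
      let c := k :: t
      let n := c.length
      let ones : Finset ℕ := (Finset.Icc 1 n).filter fun i => c.getD (i - 1) 0 = 1
      let bigs : Finset ℕ := (Finset.Icc 1 n).filter fun i => 1 < c.getD (i - 1) 0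
      let evenOdd : Finset ℕ → Prop := fun A =>
        ∀ i ∈ A, (Even i → i + 1 ∈ A) ∧ (Odd i → i - 1 ∈ A)
      let oddEven : Finset ℕ → Prop := fun A =>
        ∀ i ∈ A, (Odd i → i + 1 ∈ A) ∧ (Even i → i - 1 ∈ A)
      let noEvenPair : Finset ℕ → Prop := fun B' =>
        ∀ l : ℕ, 1 ≤ l → ¬(2 * l ∈ B' ∧ 2 * l + 1 ∈ B')
      let noOddPair : Finset ℕ → Prop := fun B' =>
        ∀ l : ℕ, 1 ≤ l → ¬(2 * l - 1 ∈ B' ∧ 2 * l ∈ B')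
      let newc : Finset ℕ → Finset ℕ → List ℕ := fun A B' =>
        (List.range n).filterMap fun j =>
          if j + 1 ∈ A then none
          else some (c.getD j 0 - if j + 1 ∈ B' then 1 else 0)
      (∑ A ∈ ones.powerset.filter evenOdd,
        ∑ B' ∈ bigs.powerset.filter (fun B' => 1 ≤ A.card + B'.card ∧ noEvenPair B'),
          ((-1 : ℚ) ^ (B'.card + 1)) •
            Finsupp.mapDomain (fun w => List.replicate (A.card + B'.card) false ++ w)
              (Dfuel fuel (newc A B'))) +
      (∑ A ∈ ones.powerset.filter evenOdd,
        ∑ B' ∈ bigs.powerset.filter (fun B' => 2 ≤ A.card + B'.card ∧ noEvenPair B'),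
          ((-1 : ℚ) ^ (B'.card + 1)) •
            Finsupp.mapDomain
              (fun w => List.replicate (A.card + B'.card - 1) false ++ true :: w)
              (Dfuel fuel (newc A B'))) +
      (∑ A ∈ ones.powerset.filter oddEven,
        ∑ B' ∈ bigs.powerset.filter (fun B' => 2 ≤ A.card + B'.card ∧ noOddPair B'),
          ((-1 : ℚ) ^ B'.card) •
            Finsupp.mapDomain
              (fun w => List.replicate (A.card + B'.card - 1) false ++ true :: w)
              (Dfuel fuel (newc A B')))

/-- The map `𝔇` on tuples of positive integers. -/
def DropD (c : List ℕ) : Bw := Dfuel (c.sum + 1) c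

/-- Run-length encoding of a word in `x, y`: the exponents `(c₁, …, c_{2s})` of
`x^{c₁} y^{c₂} ⋯ x^{c_{2s-1}} y^{c_{2s}}`. -/
def rle : List Bool → List ℕ
  | [] => []
  | a :: t => ((t.takeWhile (· = a)).length + 1) :: rle (t.dropWhile (· = a))
  termination_by l => l.length
  decreasing_by
    simp only [List.length_cons]
    exact Nat.lt_succ_of_le (List.Sublist.length_le (List.dropWhile_sublist _))

def Drop1W (a : List ℕ) : H := Finsupp.mapDomain fromXY (DropD (rle (toXY a)))

/-- The Drop1 operator `𝒟 : 𝔥⁰ → 𝔥^{≥2}` of Hirose–Maesaka–Seki–Watanabe. -/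
def Drop1 (w : H) : H := w.sum fun a c => c • Drop1W a

/-- The map `der = −𝒟 ∘ φ`, i.e. `der(w) = 𝒟(w ⧢ z₂ − w * z₂)`. -/
def der (w : H) : H := Drop1 (shmul w (zw [2]) - hmul w (zw [2]))

/-- The ideal `DR_*` of `(𝔥^{≥2}, *)` spanned by the `der^n(R(u,v)) * w`. -/
def DRstar : Submodule ℚ H :=
  Submodule.span ℚ {x | ∃ (n : ℕ) (u v w : H), isH2 u ∧ isH2 v ∧ isH2 w ∧
    x = hmul (der^[n] (Rop u v)) w}

/-- The lexicographic order `≻` on the lattice `ℤτ + ℤ`. -/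
def lexGT (a b : ℤ × ℤ) : Prop := b.1 < a.1 ∨ (a.1 = b.1 ∧ b.2 < a.2)

/-- The lattice point `mτ + n`. -/
def lat (τ : ℂ) (p : ℤ × ℤ) : ℂ := p.1 * τ + p.2

/-- The finite partial sum `S_{M,N}(k₁,…,k_r; τ)` of the multiple Eisenstein series. -/
def SMN (k : List ℕ) (M N : ℕ) (τ : ℂ) : ℂ :=
  ∑ f ∈ (Fintype.piFinset fun _ : Fin k.length =>
      (Finset.Ioo (-(M : ℤ)) (M : ℤ)) ×ˢ (Finset.Ioo (-(N : ℤ)) (N : ℤ))).filter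
      (fun f => ∀ i : Fin k.length,
        lexGT (f i) (if h : (i : ℕ) + 1 < k.length then f ⟨(i : ℕ) + 1, h⟩ else (0, 0))),
    ∏ i : Fin k.length, (lat τ (f i)) ^ (-(k.get i : ℤ))

/-- The finite partial sums of the `g`-part: only lattice points with positive
imaginary part. -/
def gSMN (k : List ℕ) (M N : ℕ) (τ : ℂ) : ℂ :=
  ∑ f ∈ (Fintype.piFinset fun _ : Fin k.length =>
      (Finset.Ioo (-(M : ℤ)) (M : ℤ)) ×ˢ (Finset.Ioo (-(N : ℤ)) (N : ℤ))).filter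
      (fun f => (∀ i : Fin k.length,
        lexGT (f i) (if h : (i : ℕ) + 1 < k.length then f ⟨(i : ℕ) + 1, h⟩ else (0, 0))) ∧
        ∀ i : Fin k.length, 0 < (lat τ (f i)).im),
    ∏ i : Fin k.length, (lat τ (f i)) ^ (-(k.get i : ℤ))

/-- The multiple zeta value `ζ(k₁,…,k_r)` as an (unconditional) sum. -/
def zetaValue (k : List ℕ) : ℂ :=
  ∑' n : Fin k.length → ℕ,
    if ∀ i : Fin k.length,
        (if h : (i : ℕ) + 1 < k.length then n ⟨(i : ℕ) + 1, h⟩ else 0) < n i then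
      ∏ i : Fin k.length, (n i : ℂ) ^ (-(k.get i : ℤ))
    else 0

section Quasi

variable {R : Type*} [CommRing R] [Algebra ℚ R]

/-- `F_w(M) = Σ_{w = w₁⋯w_s} Σ_{M > m₁ > ⋯ > m_s > 0} f_{w₁}(m₁)⋯f_{w_s}(m_s)` on words. -/
def Fword (f : ℕ → H →ₗ[ℚ] R) (M : ℕ) (l : List ℕ) : R :=
  if l = [] then 1
  else ∑ c : Composition l.length,
    ∑ m ∈ (Fintype.piFinset fun _ : Fin c.length => Finset.Ioo 0 M).filter
        (fun m => StrictAnti m),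
      ∏ i : Fin c.length, f (m i) (zw ((l.splitWrtComposition c).getD (i : ℕ) []))

/-- The ℚ-linear extension of `Fword`. -/
def FL (f : ℕ → H →ₗ[ℚ] R) (M : ℕ) (w : H) : R := w.sum fun l c => c • Fword f M l

/-- `μ^{m₁,…,m_r} = 1/(r₁!⋯r_s!)` where `r₁,…,r_s` are the multiplicities of the
distinct values of `m`. -/
def muCoeff {s : ℕ} (m : Fin s → ℕ) : ℚ :=
  (∏ v ∈ Finset.image m Finset.univ,
    ((Finset.univ.filter fun i => m i = v).card.factorial : ℚ))⁻¹

/-- `coF(M)` on words: supported on powers of `z₁`. -/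
def coFword (a : ℕ → R) (M : ℕ) (l : List ℕ) : R :=
  if ∀ k ∈ l, k = 1 then
    (-1 : R) ^ l.length *
      ∑ m ∈ (Fintype.piFinset fun _ : Fin l.length => Finset.Ioo 0 M).filter
          (fun m => Antitone m),
        muCoeff m • ∏ i : Fin l.length, a (m i)
  else 0

/-- The ℚ-linear extension of `coFword`. -/
def coFL (a : ℕ → R) (M : ℕ) (w : H) : R := w.sum fun l c => c • coFword a M l

/-- `F^*(M)`: the deconcatenation convolution of `coF(M)` and `F(M)` on words. -/
def FstarWord (f : ℕ → H →ₗ[ℚ] R) (M : ℕ) (l : List ℕ) : R :=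
  ∑ i ∈ Finset.range (l.length + 1),
    coFword (fun m => f m (zw [1])) M (l.take i) * Fword f M (l.drop i)

/-- The ℚ-linear extension of `FstarWord`. -/
def FstarL (f : ℕ → H →ₗ[ℚ] R) (M : ℕ) (w : H) : R := w.sum fun l c => c • FstarWord f M l

end Quasi

/-- Parse a word `b_{k₁}b₀^{m₁} ⋯ b_{k_r}b₀^{m_r}` (a list over ℕ, with `0` playing the
role of `b₀`) into the list of pairs `(k₁,m₁), …, (k_r,m_r)`. -/
def toPairs : List ℕ → List (ℕ × ℕ)
  | [] => []
  | k :: t => (k, (t.takeWhile (· = 0)).length) :: toPairs (t.dropWhile (· = 0))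
  termination_by l => l.length
  decreasing_by
    simp only [List.length_cons]
    exact Nat.lt_succ_of_le (List.Sublist.length_le (List.dropWhile_sublist _))

def ofPairs (P : List (ℕ × ℕ)) : List ℕ :=
  (P.map fun p => p.1 :: List.replicate p.2 0).flatten

/-- The involution `τ_b` on words of `ℚ⟨ℬ⟩⁰`. -/
def taubW (l : List ℕ) : List ℕ :=
  ofPairs (((toPairs l).map fun p => (p.2 + 1, p.1 - 1)).reverse)

/-- The ℚ-linear involution `τ_b` on `ℚ⟨ℬ⟩⁰`. -/
def taub (w : H) : H := w.sum fun a c => c • (Finsupp.single (taubW a) 1 : H)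

/-- The balanced harmonic product `*_b` on words of `ℚ⟨ℬ⟩⁰`. -/
def hbW : List ℕ → List ℕ → H
  | [], v => Finsupp.single v 1
  | i :: u, [] => Finsupp.single (i :: u) 1
  | i :: u, j :: v =>
      Finsupp.mapDomain (i :: ·) (hbW u (j :: v)) +
      Finsupp.mapDomain (j :: ·) (hbW (i :: u) v) +
      (if i ≠ 0 ∧ j ≠ 0 then Finsupp.mapDomain ((i + j) :: ·) (hbW u v) else 0)
  termination_by u v => u.length + v.length

/-- The balanced harmonic product `*_b`. -/
def hb (u v : H) : H := u.sum fun a ca => v.sum fun b cb => (ca * cb) • hbW a b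

/-- The derivation `D` of `ℚ⟨ℬ⟩⁰`:
`D(b_{k₁}b₀^{m₁}⋯b_{k_r}b₀^{m_r}) = Σ_{1≤i≤j≤r} k_i(m_j+1)·(word with k_i, m_j increased)`. -/
def Dbal (w : H) : H :=
  w.sum fun a c =>
    let P := toPairs a
    ∑ i ∈ Finset.range P.length, ∑ j ∈ Finset.Ico i P.length,
      (c * (P.getD i (0, 0)).1 * ((P.getD j (0, 0)).2 + 1)) •
        (Finsupp.single (ofPairs (P.mapIdx fun t p =>
          ((if t = i then p.1 + 1 else p.1), (if t = j then p.2 + 1 else p.2)))) 1 : H)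

/-!
In the letters `x, y` (here `false, true`) one has `z₂ = xy`, so the claim is a computation of
`(xy)^r ⧢ xy`. Peeling the leading `xy` off `(xy)^r` with the shuffle recursion gives a joint
induction on `r` for `(xy)^r ⧢ y` and `(xy)^r ⧢ xy`. The one regrouping that is not a plain
shift of indices is `x (xy)^b xyy = xxy (xy)^b y`: it is how the four contributions to each
`z₃ z₂^b z₁ z₂^c` are collected.
-/

def xyPow : ℕ → List Bool
  | 0 => []
  | r + 1 => false :: true :: xyPow r

lemma xyPow_succ (r : ℕ) : xyPow (r + 1) = false :: true :: xyPow r := rfl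

lemma xyPow_append_xy (a : ℕ) (w : List Bool) :
    xyPow a ++ false :: true :: w = false :: true :: (xyPow a ++ w) := by
  induction a with
  | zero => rfl
  | succ n ih => simp only [xyPow, List.cons_append, ih]

lemma toXY_cons (k : ℕ) (l : List ℕ) :
    toXY (k :: l) = List.replicate (k - 1) false ++ true :: toXY l := by
  simp [toXY]

lemma toXY_append (l l' : List ℕ) : toXY (l ++ l') = toXY l ++ toXY l' := by
  simp [toXY]

lemma toXY_replicate_two (r : ℕ) : toXY (List.replicate r 2) = xyPow r := by
  induction r with
  | zero => rfl
  | succ n ih => rw [List.replicate_succ, toXY_cons, ih]; rfl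

lemma fromXYAux_replicate_false_append (n c : ℕ) (t : List Bool) :
    fromXYAux (List.replicate n false ++ t) c = fromXYAux t (c + n) := by
  induction n generalizing c with
  | zero => rfl
  | succ n ih =>
    rw [List.replicate_succ, List.cons_append, fromXYAux, ih]
    ring_nf

lemma fromXY_toXY {l : List ℕ} (hl : ∀ k ∈ l, 1 ≤ k) : fromXY (toXY l) = l := by
  induction l with
  | nil => rfl
  | cons k l ih =>
    simp only [List.mem_cons, forall_eq_or_imp] at hl
    rw [fromXY] at ih
    rw [fromXY, toXY_cons, fromXYAux_replicate_false_append, fromXYAux, ih hl.2]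
    congr 1
    omega

lemma shW_nil_right (w : List Bool) : shW w [] = Finsupp.single w 1 := by
  cases w <;> rw [shW]

lemma shW_cons_y (a : Bool) (u : List Bool) :
    shW (a :: u) [true] =
      Finsupp.mapDomain (a :: ·) (shW u [true]) + Finsupp.single (true :: a :: u) 1 := by
  rw [shW, shW_nil_right, Finsupp.mapDomain_single]

lemma shW_cons_xy (a : Bool) (u : List Bool) :
    shW (a :: u) [false, true] =
      Finsupp.mapDomain (a :: ·) (shW u [false, true]) +
      Finsupp.mapDomain (false :: ·) (shW (a :: u) [true]) := by
  rw [shW]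

lemma shW_xyPow_y (r : ℕ) :
    shW (xyPow r) [true] =
      Finsupp.single (true :: xyPow r) 1 +
      (2 : ℚ) • ∑ a ∈ Finset.range r,
        Finsupp.single (xyPow a ++ false :: true :: true :: xyPow (r - 1 - a)) 1 := by
  induction r with
  | zero => simp [xyPow, shW]
  | succ n ih =>
    have shift : ∀ a,
        xyPow (a + 1) ++ false :: true :: true :: xyPow (n + 1 - 1 - (a + 1)) =
          false :: true :: (xyPow a ++ false :: true :: true :: xyPow (n - 1 - a)) := fun a => by
      rw [show n + 1 - 1 - (a + 1) = n - 1 - a by omega]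
      rfl
    rw [xyPow_succ, shW_cons_y, shW_cons_y, ih, Finset.sum_range_succ',
      Finset.sum_congr rfl fun a _ => congrArg (Finsupp.single · (1 : ℚ)) (shift a)]
    simp only [Finsupp.mapDomain_add, Finsupp.mapDomain_single, Finsupp.mapDomain_smul,
      Finsupp.mapDomain_finsetSum, xyPow, List.nil_append, Nat.add_sub_cancel, Nat.sub_zero]
    module

/-- `z₂^a z₃ z₂^b z₁ z₂^c` in the letters `x, y`. -/
def xyWord (a b c : ℕ) : List Bool :=
  xyPow a ++ false :: false :: true :: (xyPow b ++ true :: xyPow c)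

lemma xy_cons_xyWord (a b c : ℕ) : false :: true :: xyWord a b c = xyWord (a + 1) b c := rfl

lemma x_cons_xyPow_append_xyy (b c : ℕ) :
    false :: (xyPow b ++ false :: true :: true :: xyPow c) = xyWord 0 b c := by
  rw [xyPow_append_xy]
  rfl

lemma shW_xyPow_xy (r : ℕ) :
    shW (xyPow r) [false, true] =
      ((r : ℚ) + 1) • Finsupp.single (xyPow (r + 1)) 1 +
      (4 : ℚ) • ∑ a ∈ Finset.range r, ∑ b ∈ Finset.range (r - a),
        Finsupp.single (xyWord a b (r - 1 - a - b)) 1 := by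
  induction r with
  | zero => simp [xyPow, shW]
  | succ n ih =>
    rw [xyPow_succ, shW_cons_xy, shW_cons_xy, shW_cons_y, ← xyPow_succ, shW_xyPow_y,
      shW_xyPow_y, ih]
    simp only [Finsupp.mapDomain_add, Finsupp.mapDomain_single, Finsupp.mapDomain_smul,
      Finsupp.mapDomain_finsetSum, Finset.sum_range_succ', Nat.add_sub_cancel, Nat.sub_zero,
      Nat.add_sub_add_right]
    have hsub : ∀ x, n - 1 - x = n - (x + 1) := fun x => by omega
    have hxxy : ∀ b c, false :: false :: true :: (xyPow b ++ false :: true :: true :: xyPow c) =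
        xyWord 0 (b + 1) c := fun b c => x_cons_xyPow_append_xyy (b + 1) c
    have hxxyy : false :: false :: true :: true :: xyPow n = xyWord 0 0 n :=
      x_cons_xyPow_append_xyy 0 n
    simp only [xy_cons_xyWord, ← xyPow_succ, x_cons_xyPow_append_xyy, hsub, hxxy, hxxyy]
    push_cast
    module

lemma fromXY_xyPow (r : ℕ) : fromXY (xyPow r) = List.replicate r 2 := by
  rw [← toXY_replicate_two, fromXY_toXY]
  simp

lemma fromXY_xyWord (a b c : ℕ) :
    fromXY (xyWord a b c) =
      List.replicate a 2 ++ 3 :: (List.replicate b 2 ++ 1 :: List.replicate c 2) := by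
  have : xyWord a b c =
      toXY (List.replicate a 2 ++ 3 :: (List.replicate b 2 ++ 1 :: List.replicate c 2)) := by
    simp only [toXY_append, toXY_cons, toXY_replicate_two, xyWord]
    rfl
  rw [this, fromXY_toXY]
  simp +contextual [or_imp]

lemma shmul_zw (u v : List ℕ) : shmul (zw u) (zw v) = shmulW u v := by
  simp [shmul, zw]

lemma Finset.sum_Icc_Icc_eq_sum_range_range {M : Type*} [AddCommMonoid M] (r : ℕ)
    (f : ℕ → ℕ → M) :
    ∑ i ∈ Finset.Icc 1 r, ∑ j ∈ Finset.Icc i r, f i j =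
      ∑ a ∈ Finset.range r, ∑ b ∈ Finset.range (r - a), f (1 + a) (1 + a + b) := by
  rw [← Finset.Ico_add_one_right_eq_Icc, Finset.sum_Ico_eq_sum_range]
  refine Finset.sum_congr rfl fun a _ => ?_
  rw [← Finset.Ico_add_one_right_eq_Icc, Finset.sum_Ico_eq_sum_range,
    show r + 1 - (1 + a) = r - a by omega]

/-- `z₂^r ⧢ z₂ = (r+1)·z₂^{r+1} + 4·Σ_{1≤i≤j≤r} z₂^{i−1} z₃ z₂^{j−i} z₁ z₂^{r−j}`. -/
theorem stmt8 (r : ℕ) :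
    shmul (zw (List.replicate r 2)) (zw [2]) =
      ((r + 1 : ℕ) : ℚ) • zw (List.replicate (r + 1) 2) +
      (4 : ℚ) • ∑ i ∈ Finset.Icc 1 r, ∑ j ∈ Finset.Icc i r,
        zw (List.replicate (i - 1) 2 ++ 3 ::
          (List.replicate (j - i) 2 ++ 1 :: List.replicate (r - j) 2)) := by
  rw [shmul_zw, shmulW, toXY_replicate_two, show toXY [2] = [false, true] from rfl,
    shW_xyPow_xy, Finset.sum_Icc_Icc_eq_sum_range_range]
  simp only [Finsupp.mapDomain_add, Finsupp.mapDomain_single, Finsupp.mapDomain_smul,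
    Finsupp.mapDomain_finsetSum, fromXY_xyPow, fromXY_xyWord, Nat.add_sub_cancel_left,
    show ∀ a b, r - (1 + a + b) = r - 1 - a - b by omega]
  push_cast
  rfl
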